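/- arXiv:0809.1047 — 2 statements merged into one kernel-verified Lean document; each statement's English description precedes it below -/
import Mathlib

section
/- Let n ≥ 1 be an integer, t > 0 a real number, and α₀, α₁, …, α_n real numbers with 0 ≤ α_k < 1 for every k. Set t₀ = t, t_{n+1} = 0 and β₀ = α₀ + α₁ + ⋯ + α_n. Then the iterated integral over the simplex 0 < t_n < t_{n-1} < ⋯ < t₁ < t of the product ∏_{k=0}^{n} (t_k − t_{k+1})^{−α_k} dt₁ ⋯ dt_n equals t^{n − β₀} · (∏_{k=0}^{n} Γ(1 − α_k)) / Γ(n + 1 − β₀). -/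
/-!
Induction on `n`, peeling off the outermost variable `t₁`. By Tonelli, the integral over
`0 < t_n < ⋯ < t₁ < t` is `∫₀ᵗ (t - t₁)^(-α₀)` times the integral over `0 < t_n < ⋯ < t₂ < t₁`,
which by induction is `t₁^(n - 1 - β₁) ∏_{k ≥ 1} Γ(1 - α_k) / Γ(n - β₁)` with
`β₁ = α₁ + ⋯ + α_n`. What remains is the Beta integral
`∫₀ᵗ t₁^(b-1) (t - t₁)^(a-1) dt₁ = t^(a+b-1) Γ(a) Γ(b) / Γ(a + b)` for `a = 1 - α₀`,
`b = n - β₁`, in which `Γ(b)` cancels.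
-/

open MeasureTheory Set
open scoped ENNReal

theorem lintegral_fin_succ_cons {n : ℕ} {α : Type*} [MeasureSpace α]
    [SigmaFinite (volume : Measure α)] {f : (Fin (n + 1) → α) → ℝ≥0∞} (hf : Measurable f) :
    ∫⁻ s, f s = ∫⁻ x, ∫⁻ s, f (Fin.cons x s) := by
  have e := (volume_preserving_piFinSuccAbove (fun _ : Fin (n + 1) => α) 0).symm
  rw [← e.lintegral_comp hf, Measure.volume_eq_prod]
  refine (lintegral_prod _ (hf.comp e.measurable).aemeasurable).trans ?_
  simp only [Function.comp_apply, MeasurableEquiv.piFinSuccAbove_symm_apply,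
    Fin.insertNthEquiv_zero]
  rfl

theorem lintegral_rpow_mul_one_sub_rpow {a b : ℝ} (ha : 0 < a) (hb : 0 < b) :
    ∫⁻ x in Ioo 0 1, ENNReal.ofReal (x ^ (a - 1) * (1 - x) ^ (b - 1)) =
      ENNReal.ofReal (ProbabilityTheory.beta a b) := by
  have hB := ProbabilityTheory.beta_pos ha hb
  have h := ProbabilityTheory.lintegral_betaPDF_eq_one ha hb
  simp_rw [ProbabilityTheory.lintegral_betaPDF, mul_assoc,
    ENNReal.ofReal_mul (one_div_pos.2 hB).le] at h
  rw [lintegral_const_mul' _ _ ENNReal.ofReal_ne_top, one_div,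
    ENNReal.ofReal_inv_of_pos hB] at h
  rw [ENNReal.eq_inv_of_mul_eq_one_left ((mul_comm _ _).trans h), inv_inv]

theorem lintegral_rpow_mul_sub_rpow {a b t : ℝ} (ha : 0 < a) (hb : 0 < b) (ht : 0 < t) :
    ∫⁻ x in Ioo 0 t, ENNReal.ofReal (x ^ (a - 1) * (t - x) ^ (b - 1)) =
      ENNReal.ofReal (t ^ (a + b - 1) * ProbabilityTheory.beta a b) := by
  have himage : (t * ·) '' Ioo 0 1 = Ioo 0 t := by
    rw [image_mul_left_Ioo ht, mul_zero, mul_one]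
  have hscale : ∀ x ∈ Ioo (0 : ℝ) 1,
      ENNReal.ofReal |t| * ENNReal.ofReal ((t * x) ^ (a - 1) * (t - t * x) ^ (b - 1)) =
        ENNReal.ofReal (t ^ (a + b - 1)) * ENNReal.ofReal (x ^ (a - 1) * (1 - x) ^ (b - 1)) := by
    rintro x ⟨hx0, hx1⟩
    rw [← ENNReal.ofReal_mul (abs_nonneg t), ← ENNReal.ofReal_mul (by positivity),
      abs_of_pos ht, ← mul_one_sub, Real.mul_rpow ht.le hx0.le,
      Real.mul_rpow ht.le (sub_pos.2 hx1).le, show a + b - 1 = 1 + (a - 1) + (b - 1) by ring,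
      Real.rpow_add ht, Real.rpow_add ht, Real.rpow_one]
    ring_nf
  rw [← himage, lintegral_image_eq_lintegral_abs_deriv_mul measurableSet_Ioo
      (fun x _ => (hasDerivAt_const_mul t).hasDerivWithinAt) (mul_right_injective₀ ht.ne').injOn,
    setLIntegral_congr_fun measurableSet_Ioo hscale,
    lintegral_const_mul' _ _ ENNReal.ofReal_ne_top,
    lintegral_rpow_mul_one_sub_rpow ha hb, ← ENNReal.ofReal_mul (by positivity)]

def simplexChain (t : ℝ) {n : ℕ} (s : Fin n → ℝ) : Fin (n + 2) → ℝ :=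
  Fin.cons t (Fin.snoc s 0)

def openSimplex (n : ℕ) (t : ℝ) : Set (Fin n → ℝ) :=
  {s | ∀ k : Fin (n + 1), simplexChain t s k.succ < simplexChain t s k.castSucc}

noncomputable def simplexKernel (t : ℝ) {n : ℕ} (α : Fin (n + 1) → ℝ) (s : Fin n → ℝ) : ℝ :=
  ∏ k, (simplexChain t s k.castSucc - simplexChain t s k.succ) ^ (-α k)

theorem simplexChain_cons (t x : ℝ) {n : ℕ} (s : Fin n → ℝ) :
    simplexChain t (Fin.cons x s) = Fin.cons t (simplexChain x s) := by
  rw [simplexChain, simplexChain, ← Fin.cons_snoc_eq_snoc_cons]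

@[simp]
theorem simplexChain_zero (t : ℝ) {n : ℕ} (s : Fin n → ℝ) : simplexChain t s 0 = t := rfl

theorem continuous_simplexChain (t : ℝ) (n : ℕ) :
    Continuous fun s : Fin n → ℝ => simplexChain t s := by
  refine continuous_pi fun j => Fin.cases ?_ (fun i => Fin.lastCases ?_ (fun m => ?_) i) j <;>
    simp [simplexChain, continuous_apply, continuous_const]

theorem mem_openSimplex_iff_strictAnti {n : ℕ} {t : ℝ} {s : Fin n → ℝ} :
    s ∈ openSimplex n t ↔ StrictAnti (simplexChain t s) :=
  Fin.strictAnti_iff_succ_lt.symm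

theorem pos_of_mem_openSimplex {n : ℕ} {t : ℝ} {s : Fin n → ℝ} (hs : s ∈ openSimplex n t) :
    0 < t := by
  simpa [simplexChain] using
    mem_openSimplex_iff_strictAnti.1 hs (Fin.succ_pos (Fin.last n))

theorem cons_mem_openSimplex_iff {n : ℕ} {t x : ℝ} {s : Fin n → ℝ} :
    Fin.cons x s ∈ openSimplex (n + 1) t ↔ x ∈ Ioo 0 t ∧ s ∈ openSimplex n x := by
  simp only [openSimplex, mem_ofPred_eq, Fin.forall_fin_succ (n := n + 1), simplexChain_cons,
    ← Fin.succ_castSucc, Fin.cons_succ, Fin.castSucc_zero, simplexChain_zero]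
  exact ⟨fun ⟨hxt, hs⟩ => ⟨⟨pos_of_mem_openSimplex hs, hxt⟩, hs⟩, fun ⟨hx, hs⟩ => ⟨hx.2, hs⟩⟩

theorem isOpen_openSimplex (n : ℕ) (t : ℝ) : IsOpen (openSimplex n t) := by
  simp only [openSimplex, ofPred_forall]
  exact isOpen_iInter_of_finite fun k => isOpen_lt
    ((continuous_apply _).comp (continuous_simplexChain t n))
    ((continuous_apply _).comp (continuous_simplexChain t n))

theorem measurable_simplexKernel (t : ℝ) {n : ℕ} (α : Fin (n + 1) → ℝ) :
    Measurable (simplexKernel t α) := by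
  have h := (continuous_simplexChain t n).measurable
  unfold simplexKernel
  fun_prop

theorem simplexKernel_cons (t x : ℝ) {n : ℕ} (α : Fin (n + 2) → ℝ) (s : Fin n → ℝ) :
    simplexKernel t α (Fin.cons x s) = (t - x) ^ (-α 0) * simplexKernel x (Fin.tail α) s := by
  simp only [simplexKernel, Fin.prod_univ_succ (n := n + 1), simplexChain_cons,
    ← Fin.succ_castSucc, Fin.cons_succ, Fin.castSucc_zero, Fin.cons_zero, simplexChain_zero]
  rfl

theorem setLIntegral_openSimplex_succ {n : ℕ} (t : ℝ) {f : (Fin (n + 1) → ℝ) → ℝ≥0∞}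
    (hf : Measurable f) :
    ∫⁻ s in openSimplex (n + 1) t, f s =
      ∫⁻ x in Ioo 0 t, ∫⁻ s in openSimplex n x, f (Fin.cons x s) := by
  rw [← lintegral_indicator (isOpen_openSimplex _ t).measurableSet,
    lintegral_fin_succ_cons (hf.indicator (isOpen_openSimplex _ t).measurableSet),
    ← lintegral_indicator measurableSet_Ioo]
  refine lintegral_congr fun x => ?_
  classical
  by_cases hx : x ∈ Ioo 0 t
  · rw [indicator_of_mem hx, ← lintegral_indicator (isOpen_openSimplex n x).measurableSet]
    simp only [indicator_apply, cons_mem_openSimplex_iff, hx, true_and]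
  · simp [cons_mem_openSimplex_iff, hx]

theorem openSimplex_zero {t : ℝ} (ht : 0 < t) : openSimplex 0 t = univ := by
  ext s
  simp [openSimplex, simplexChain, Fin.snoc, ht]

theorem simplexKernel_zero (t : ℝ) (α : Fin 1 → ℝ) (s : Fin 0 → ℝ) :
    simplexKernel t α s = t ^ (-α 0) := by
  simp [simplexKernel, simplexChain, Fin.snoc]

theorem simplexKernel_nonneg {n : ℕ} {t : ℝ} (α : Fin (n + 1) → ℝ) {s : Fin n → ℝ}
    (hs : s ∈ openSimplex n t) : 0 ≤ simplexKernel t α s :=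
  Finset.prod_nonneg fun k _ => Real.rpow_nonneg (sub_nonneg.2 (hs k).le) _

theorem sum_lt_of_forall_lt_one {n : ℕ} {α : Fin (n + 1) → ℝ} (hα : ∀ k, α k < 1) :
    ∑ k, α k < n + 1 := by
  calc ∑ k, α k < ∑ _k : Fin (n + 1), (1 : ℝ) :=
        Finset.sum_lt_sum_of_nonempty Finset.univ_nonempty fun k _ => hα k
    _ = n + 1 := by simp

/-- Stated for `∫⁻`, so that Tonelli applies without integrability side conditions. -/
theorem lintegral_openSimplex_simplexKernel (n : ℕ) {t : ℝ} (ht : 0 < t) {α : Fin (n + 1) → ℝ}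
    (hα : ∀ k, α k < 1) :
    ∫⁻ s in openSimplex n t, ENNReal.ofReal (simplexKernel t α s) =
      ENNReal.ofReal (t ^ ((n : ℝ) - ∑ k, α k) * (∏ k, Real.Gamma (1 - α k)) /
        Real.Gamma ((n : ℝ) + 1 - ∑ k, α k)) := by
  induction n generalizing t with
  | zero =>
    have hΓ : Real.Gamma (1 - α 0) ≠ 0 := (Real.Gamma_pos_of_pos (sub_pos.2 (hα 0))).ne'
    simp [openSimplex_zero ht, simplexKernel_zero, hΓ, volume_pi]
  | succ n ih =>
    set a := 1 - α 0
    set b := (n : ℝ) + 1 - ∑ k, Fin.tail α k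
    set C := ∏ k, Real.Gamma (1 - Fin.tail α k)
    have ha : 0 < a := sub_pos.2 (hα 0)
    have hα' : ∀ k, Fin.tail α k < 1 := fun k => hα k.succ
    have hb : 0 < b := by linarith [sum_lt_of_forall_lt_one hα']
    have hC : 0 ≤ C / Real.Gamma b := div_nonneg (Finset.prod_nonneg fun k _ =>
      (Real.Gamma_pos_of_pos (sub_pos.2 (hα' k))).le) (Real.Gamma_pos_of_pos hb).le
    have hfiber : ∀ x ∈ Ioo 0 t,
        ∫⁻ s in openSimplex n x, ENNReal.ofReal (simplexKernel t α (Fin.cons x s)) =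
          ENNReal.ofReal (C / Real.Gamma b) *
            ENNReal.ofReal (x ^ (b - 1) * (t - x) ^ (a - 1)) := by
      rintro x ⟨hx0, hxt⟩
      have hnn : 0 ≤ (t - x) ^ (-α 0) := Real.rpow_nonneg (sub_pos.2 hxt).le _
      simp_rw [simplexKernel_cons, ENNReal.ofReal_mul hnn]
      rw [lintegral_const_mul' _ _ ENNReal.ofReal_ne_top, ih hx0 hα',
        ← ENNReal.ofReal_mul hnn, ← ENNReal.ofReal_mul hC]
      congr 1
      simp only [a, b, C]
      ring_nf
    rw [setLIntegral_openSimplex_succ t (measurable_simplexKernel t α).ennreal_ofReal,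
      setLIntegral_congr_fun measurableSet_Ioo hfiber,
      lintegral_const_mul' _ _ ENNReal.ofReal_ne_top,
      lintegral_rpow_mul_sub_rpow hb ha ht, ← ENNReal.ofReal_mul hC]
    congr 1
    have hab : b + a = ((n + 1 : ℕ) : ℝ) + 1 - ∑ k, α k := by
      simp only [a, b, Fin.sum_univ_succ, Fin.tail]
      push_cast
      ring
    rw [ProbabilityTheory.beta, show b + a - 1 = ((n + 1 : ℕ) : ℝ) - ∑ k, α k by rw [hab]; ring,
      hab, Fin.prod_univ_succ]
    field_simp [(Real.Gamma_pos_of_pos hb).ne']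
    rw [mul_comm C]
    rfl

theorem simplex_integral_of_beta_general (n : ℕ) (t : ℝ) (ht : 0 < t)
    (α : Fin (n + 1) → ℝ) (hα1 : ∀ k, α k < 1) :
    (∫ s in {s : Fin n → ℝ |
        ∀ k : Fin (n + 1),
          (Fin.cons t (Fin.snoc s 0) : Fin (n + 2) → ℝ) k.succ <
            (Fin.cons t (Fin.snoc s 0) : Fin (n + 2) → ℝ) k.castSucc},
      ∏ k : Fin (n + 1),
        ((Fin.cons t (Fin.snoc s 0) : Fin (n + 2) → ℝ) k.castSucc -
            (Fin.cons t (Fin.snoc s 0) : Fin (n + 2) → ℝ) k.succ) ^ (-α k)) =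
      t ^ ((n : ℝ) - ∑ k, α k) * (∏ k, Real.Gamma (1 - α k)) /
        Real.Gamma ((n : ℝ) + 1 - ∑ k, α k) := by
  change ∫ s in openSimplex n t, simplexKernel t α s = _
  have hΓ : 0 < Real.Gamma ((n : ℝ) + 1 - ∑ k, α k) :=
    Real.Gamma_pos_of_pos (by linarith [sum_lt_of_forall_lt_one hα1])
  have hΓprod : 0 ≤ ∏ k, Real.Gamma (1 - α k) :=
    Finset.prod_nonneg fun k _ => (Real.Gamma_pos_of_pos (sub_pos.2 (hα1 k))).le
  rw [integral_eq_lintegral_of_nonneg_ae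
      (ae_restrict_of_forall_mem (isOpen_openSimplex n t).measurableSet
        fun s hs => simplexKernel_nonneg α hs)
      (measurable_simplexKernel t α).aestronglyMeasurable,
    lintegral_openSimplex_simplexKernel n ht hα1,
    ENNReal.toReal_ofReal (div_nonneg (mul_nonneg (Real.rpow_nonneg ht.le _) hΓprod) hΓ.le)]

/-- The iterated simplex integral
`∫_{0 < t_n < ⋯ < t₁ < t} ∏_{k=0}^n (t_k - t_{k+1})^{-α_k} dt₁⋯dt_n`
(with the conventions `t₀ = t`, `t_{n+1} = 0`) equals
`t^{n-β₀} (∏_{k=0}^n Γ(1-α_k)) / Γ(n+1-β₀)` where `β₀ = ∑_{k=0}^n α_k`. -/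
theorem simplex_integral_of_beta (n : ℕ) (hn : 1 ≤ n) (t : ℝ) (ht : 0 < t)
    (α : Fin (n + 1) → ℝ) (hα0 : ∀ k, 0 ≤ α k) (hα1 : ∀ k, α k < 1) :
    (∫ s in {s : Fin n → ℝ |
        ∀ k : Fin (n + 1),
          (Fin.cons t (Fin.snoc s 0) : Fin (n + 2) → ℝ) k.succ <
            (Fin.cons t (Fin.snoc s 0) : Fin (n + 2) → ℝ) k.castSucc},
      ∏ k : Fin (n + 1),
        ((Fin.cons t (Fin.snoc s 0) : Fin (n + 2) → ℝ) k.castSucc -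
            (Fin.cons t (Fin.snoc s 0) : Fin (n + 2) → ℝ) k.succ) ^ (-α k)) =
      t ^ ((n : ℝ) - ∑ k, α k) * (∏ k, Real.Gamma (1 - α k)) /
        Real.Gamma ((n : ℝ) + 1 - ∑ k, α k) :=
  simplex_integral_of_beta_general n t ht α hα1
end

section
/- Let d ≥ 1 and let 𝔪 be an even positive integer, and define G(t,x) = (2π)^{−d} ∫_{ℝ^d} e^{i⟨x,ξ⟩} e^{−t‖ξ‖^𝔪} dξ for t > 0. Then there exists a constant C > 0 such that for all t > 0 and all y ∈ ℝ^d, ∫_{ℝ^d} |G(t, x + y) − G(t, x)| dx ≤ C · min( 1 , t^{−1/𝔪} ‖y‖ ). Consequently, if moreover 𝔪 > d and γ = 2(1 − d/𝔪), then for every T > 0, sup_{t ∈ (0,T)} t^γ ∫_{ℝ^d} |G(t, x+y) − G(t, x)| dx ≤ C · T^{γ − 1/𝔪} ‖y‖, which tends to 0 as y → 0. -/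
open MeasureTheory
open scoped RealInnerProductSpace

/-- The Green's function of `∂_t + (-Δ)^{𝔪/2}`:
`G(t,x) = (2π)^{-d} ∫ e^{i⟨x,ξ⟩} e^{-t‖ξ‖^𝔪} dξ`. -/
noncomputable def greenFn (d : ℕ) (𝔪 : ℝ) (t : ℝ) (x : EuclideanSpace ℝ (Fin d)) : ℂ :=
  (((2 * Real.pi) ^ d)⁻¹ : ℝ) •
    ∫ ξ : EuclideanSpace ℝ (Fin d),
      Complex.exp (Complex.I * (⟪x, ξ⟫ : ℝ)) * (Real.exp (-t * ‖ξ‖ ^ 𝔪) : ℂ)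

/-!
Substituting `ξ = t^{-1/𝔪} η` gives `G(t, x) = r^d G(1, r x)` with `r = t^{-1/𝔪}`, so the `L¹` norm
of `G(t, · + y) - G(t, ·)` equals that of `G(1, · + r y) - G(1, ·)`. Substituting `ξ = 2π η` shows
that `G(1, ·)` is the inverse Fourier transform of the Schwartz function `exp(-(2π)^𝔪 ‖η‖^𝔪)`,
hence is itself a Schwartz function `W`. Finally `∫ ‖W(x + h) - W(x)‖ dx` is at most `2 ‖W‖₁` by the
triangle inequality, and at most `‖h‖ ‖DW‖₁` by the fundamental theorem of calculus along
`[x, x + h]` and Fubini.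
-/

open Real Set Filter Topology Module
open scoped ContDiff SchwartzMap FourierTransform

theorem integral_norm_sub_translate_le_two_mul {G F : Type*} [NormedAddCommGroup F]
    [AddGroup G] [MeasurableSpace G] [MeasurableAdd G] {μ : Measure G} [μ.IsAddRightInvariant]
    {f : G → F} (hf : Integrable f μ) (h : G) :
    ∫ x, ‖f (x + h) - f x‖ ∂μ ≤ 2 * ∫ x, ‖f x‖ ∂μ := by
  have hfh : Integrable (fun x => f (x + h)) μ := hf.comp_add_right h
  calc ∫ x, ‖f (x + h) - f x‖ ∂μ ≤ ∫ x, (‖f (x + h)‖ + ‖f x‖) ∂μ :=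
        integral_mono (hfh.sub hf).norm (hfh.norm.add hf.norm) fun x => norm_sub_le _ _
    _ = 2 * ∫ x, ‖f x‖ ∂μ := by
        rw [integral_add hfh.norm hf.norm, integral_add_right_eq_self (fun x => ‖f x‖) h]
        ring

section Derivative

variable {E F : Type*} [NormedAddCommGroup E] [NormedSpace ℝ E] [NormedAddCommGroup F]
  [NormedSpace ℝ F] [CompleteSpace F] {f : E → F}

theorem norm_sub_le_mul_intervalIntegral_norm_fderiv (hf : ContDiff ℝ 1 f) (x h : E) :
    ‖f (x + h) - f x‖ ≤ ‖h‖ * ∫ s in (0 : ℝ)..1, ‖fderiv ℝ f (x + s • h)‖ := by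
  have hDf : Continuous fun s : ℝ => fderiv ℝ f (x + s • h) :=
    (hf.continuous_fderiv one_ne_zero).comp (by fun_prop)
  have hDfh : Continuous fun s : ℝ => fderiv ℝ f (x + s • h) h := hDf.clm_apply continuous_const
  have hderiv (s : ℝ) : HasDerivAt (fun s : ℝ => f (x + s • h)) (fderiv ℝ f (x + s • h) h) s :=
    ((hf.differentiable one_ne_zero) _).hasFDerivAt.comp_hasDerivAt s
      (by simpa using ((hasDerivAt_id s).smul_const h).const_add x)
  have hftc : ∫ s in (0 : ℝ)..1, fderiv ℝ f (x + s • h) h = f (x + h) - f x := by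
    simpa using intervalIntegral.integral_eq_sub_of_hasDerivAt (fun s _ => hderiv s)
      (hDfh.intervalIntegrable 0 1)
  calc ‖f (x + h) - f x‖ = ‖∫ s in (0 : ℝ)..1, fderiv ℝ f (x + s • h) h‖ := by rw [hftc]
    _ ≤ ∫ s in (0 : ℝ)..1, ‖fderiv ℝ f (x + s • h) h‖ :=
        intervalIntegral.norm_integral_le_integral_norm zero_le_one
    _ ≤ ∫ s in (0 : ℝ)..1, ‖h‖ * ‖fderiv ℝ f (x + s • h)‖ := by
        refine intervalIntegral.integral_mono_on zero_le_one ?_ ?_ fun s _ => ?_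
        · exact hDfh.norm.intervalIntegrable _ _
        · exact (continuous_const.mul hDf.norm).intervalIntegrable _ _
        · rw [mul_comm]; exact (fderiv ℝ f (x + s • h)).le_opNorm h
    _ = ‖h‖ * ∫ s in (0 : ℝ)..1, ‖fderiv ℝ f (x + s • h)‖ :=
        intervalIntegral.integral_const_mul _ _

variable [MeasurableSpace E] [BorelSpace E] [SecondCountableTopology E] {μ : Measure E}
  [SFinite μ] [μ.IsAddRightInvariant]

theorem integral_norm_sub_translate_le_mul_integral_norm_fderiv (hf : ContDiff ℝ 1 f)
    (hDf : Integrable (fun x => ‖fderiv ℝ f x‖) μ) (h : E) :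
    ∫ x, ‖f (x + h) - f x‖ ∂μ ≤ ‖h‖ * ∫ x, ‖fderiv ℝ f x‖ ∂μ := by
  set ν : Measure ℝ := volume.restrict (Ioc 0 1)
  have hint : Integrable (fun p : ℝ × E => ‖fderiv ℝ f (p.2 + p.1 • h)‖) (ν.prod μ) := by
    have hcont : Continuous fun p : ℝ × E => ‖fderiv ℝ f (p.2 + p.1 • h)‖ :=
      ((hf.continuous_fderiv one_ne_zero).comp (by fun_prop)).norm
    refine (integrable_prod_iff hcont.aestronglyMeasurable).mpr
      ⟨ae_of_all _ fun s => hDf.comp_add_right (s • h), ?_⟩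
    simp_rw [norm_norm, integral_add_right_eq_self (fun x => ‖fderiv ℝ f x‖)]
    exact integrable_const _
  have hswap : ∫ x, ∫ s, ‖fderiv ℝ f (x + s • h)‖ ∂ν ∂μ = ∫ x, ‖fderiv ℝ f x‖ ∂μ := by
    rw [← integral_integral_swap hint]
    simp_rw [integral_add_right_eq_self (fun x => ‖fderiv ℝ f x‖)]
    simp [ν]
  calc ∫ x, ‖f (x + h) - f x‖ ∂μ
      ≤ ∫ x, ‖h‖ * ∫ s, ‖fderiv ℝ f (x + s • h)‖ ∂ν ∂μ := by
        refine integral_mono_of_nonneg (ae_of_all _ fun x => norm_nonneg _)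
          (hint.integral_prod_right.const_mul _) (ae_of_all _ fun x => ?_)
        simpa [ν, intervalIntegral.integral_of_le zero_le_one] using
          norm_sub_le_mul_intervalIntegral_norm_fderiv hf x h
    _ = ‖h‖ * ∫ x, ‖fderiv ℝ f x‖ ∂μ := by rw [integral_const_mul, hswap]

end Derivative

section Schwartz

variable {E F : Type*} [NormedAddCommGroup E] [NormedSpace ℝ E] [FiniteDimensional ℝ E]
  [MeasurableSpace E] [BorelSpace E] {μ : Measure E} [μ.IsAddHaarMeasure]
  [NormedAddCommGroup F] [NormedSpace ℝ F]

theorem SchwartzMap.exists_integral_norm_sub_translate_le [CompleteSpace F] (W : 𝓢(E, F)) :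
    ∃ C, 0 < C ∧ ∀ h : E, ∫ x, ‖W (x + h) - W x‖ ∂μ ≤ C * min 1 ‖h‖ := by
  have hDW : Integrable (fun x => ‖fderiv ℝ W x‖) μ := by
    simpa only [SchwartzMap.fderivCLM_apply] using (SchwartzMap.fderivCLM ℝ E F W).integrable.norm
  set A := ∫ x, ‖W x‖ ∂μ
  set B := ∫ x, ‖fderiv ℝ W x‖ ∂μ
  have hA : 0 ≤ A := integral_nonneg fun _ => norm_nonneg _
  have hB : 0 ≤ B := integral_nonneg fun _ => norm_nonneg _
  refine ⟨max (2 * A) B + 1, by positivity, fun h => ?_⟩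
  have hsup := integral_norm_sub_translate_le_two_mul W.integrable h (μ := μ)
  have hlip := integral_norm_sub_translate_le_mul_integral_norm_fderiv (W.smooth 1) hDW h
  rcases le_total ‖h‖ 1 with hh | hh
  · rw [min_eq_right hh]
    nlinarith [le_max_right (2 * A) B, norm_nonneg h]
  · rw [min_eq_left hh]
    linarith [le_max_left (2 * A) B]

theorem integral_norm_sub_smul_comp_smul_add (f : E → F) {c : ℝ} (hc : 0 < c) (y : E) :
    ∫ x, ‖c ^ finrank ℝ E • f (c • (x + y)) - c ^ finrank ℝ E • f (c • x)‖ ∂μ =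
      ∫ x, ‖f (x + c • y) - f x‖ ∂μ := by
  simp_rw [← smul_sub, norm_smul, smul_add, norm_of_nonneg (pow_nonneg hc.le _)]
  rw [integral_const_mul, Measure.integral_comp_smul_of_nonneg μ (fun x => ‖f (x + c • y) - f x‖)
    c (hR := hc.le), smul_eq_mul, mul_inv_cancel_left₀ (by positivity)]

end Schwartz

theorem exists_bound_norm_iteratedFDeriv_smoothTransition (n : ℕ) :
    ∃ C, ∀ s, ‖iteratedFDeriv ℝ n smoothTransition s‖ ≤ C := by
  rcases n.eq_zero_or_pos with rfl | hn
  · refine ⟨1, fun s => ?_⟩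
    rw [norm_iteratedFDeriv_zero, norm_of_nonneg (smoothTransition.nonneg s)]
    exact smoothTransition.le_one s
  obtain ⟨C, hC⟩ := isCompact_Icc.exists_bound_of_continuousOn
    ((smoothTransition.contDiff.continuous_iteratedFDeriv (m := n)
      (mod_cast le_top)).continuousOn (s := Icc (0 : ℝ) 1))
  refine ⟨C, fun s => ?_⟩
  by_cases hs : s ∈ Icc 0 1
  · exact hC s hs
  -- off `[0, 1]` the transition function is locally constant
  obtain ⟨c, hc⟩ : ∃ c : ℝ, smoothTransition =ᶠ[𝓝 s] fun _ => c := by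
    rcases not_and_or.mp hs with h | h
    · exact ⟨0, (eventually_lt_nhds (not_le.mp h)).mono fun u hu =>
        smoothTransition.zero_of_nonpos hu.le⟩
    · exact ⟨1, (eventually_gt_nhds (not_le.mp h)).mono fun u hu =>
        smoothTransition.one_of_one_le hu.le⟩
  rw [(hc.iteratedFDeriv ℝ n).eq_of_nhds, iteratedFDeriv_const_of_ne hn.ne', Pi.zero_apply,
    norm_zero]
  exact (norm_nonneg _).trans (hC 0 ⟨le_rfl, zero_le_one⟩)

theorem pow_mul_exp_neg_le_factorial {s : ℝ} (hs : 0 ≤ s) (K : ℕ) :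
    s ^ K * exp (-s) ≤ K.factorial := by
  have := pow_div_factorial_le_exp s hs K
  rw [div_le_iff₀ (by positivity)] at this
  rw [exp_neg, ← div_eq_mul_inv, div_le_iff₀ (exp_pos s)]
  linarith

theorem norm_iteratedFDeriv_exp_neg (n : ℕ) (s : ℝ) :
    ‖iteratedFDeriv ℝ n (fun s => exp (-s)) s‖ = exp (-s) := by
  rw [norm_iteratedFDeriv_eq_norm_iteratedDeriv]
  have : (fun s : ℝ => exp (-s)) = fun s => exp (-1 * s) := by simp_rw [neg_one_mul]
  simp [this, abs_of_pos (exp_pos _)]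

theorem exists_bound_pow_mul_norm_iteratedFDeriv_mul_exp_neg {φ : ℝ → ℝ} (hφ : ContDiff ℝ ∞ φ)
    (hbdd : ∀ n, ∃ C, ∀ s, ‖iteratedFDeriv ℝ n φ s‖ ≤ C) (hφ0 : ∀ s ≤ 0, φ s = 0) (K n : ℕ) :
    ∃ C, ∀ s, ‖s‖ ^ K * ‖iteratedFDeriv ℝ n (fun s => φ s * exp (-s)) s‖ ≤ C := by
  choose M hM using hbdd
  set A := ∑ i ∈ Finset.range (n + 1), (n.choose i : ℝ) * M i
  have hA : 0 ≤ A := Finset.sum_nonneg fun i _ =>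
    mul_nonneg (Nat.cast_nonneg _) ((norm_nonneg _).trans (hM i 0))
  have hderiv (s : ℝ) : ‖iteratedFDeriv ℝ n (fun s => φ s * exp (-s)) s‖ ≤ A * exp (-s) := by
    refine (norm_iteratedFDeriv_mul_le hφ (g := fun s => exp (-s)) (by fun_prop) s
      (mod_cast le_top)).trans ?_
    rw [Finset.sum_mul]
    refine Finset.sum_le_sum fun i _ => ?_
    rw [norm_iteratedFDeriv_exp_neg]
    gcongr
    exact hM i s
  refine ⟨A * K.factorial, fun s => ?_⟩
  rcases lt_or_ge s 0 with hs | hs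
  · have hzero : (fun s => φ s * exp (-s)) =ᶠ[𝓝 s] fun _ => 0 :=
      (eventually_lt_nhds hs).mono fun v hv => by simp [hφ0 v hv.le]
    rw [(hzero.iteratedFDeriv ℝ n).eq_of_nhds, iteratedFDeriv_fun_zero, Pi.zero_apply,
      norm_zero, mul_zero]
    positivity
  · calc ‖s‖ ^ K * ‖iteratedFDeriv ℝ n (fun s => φ s * exp (-s)) s‖
        ≤ s ^ K * (A * exp (-s)) := by
          rw [norm_of_nonneg hs]; gcongr; exact hderiv s
      _ = A * (s ^ K * exp (-s)) := by ring
      _ ≤ A * K.factorial := by gcongr; exact pow_mul_exp_neg_le_factorial hs K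

noncomputable def smoothTransitionMulExpNeg : 𝓢(ℝ, ℝ) where
  toFun s := smoothTransition s * exp (-s)
  smooth' := smoothTransition.contDiff.mul (by fun_prop)
  decay' := exists_bound_pow_mul_norm_iteratedFDeriv_mul_exp_neg smoothTransition.contDiff
    exists_bound_norm_iteratedFDeriv_smoothTransition fun _ => smoothTransition.zero_of_nonpos

theorem smoothTransitionMulExpNeg_apply_of_one_le {s : ℝ} (hs : 1 ≤ s) :
    smoothTransitionMulExpNeg s = exp (-s) := by
  show smoothTransition s * exp (-s) = exp (-s)
  rw [smoothTransition.one_of_one_le hs, one_mul]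

theorem norm_le_one_add_inv_mul_one_add_norm_one_add_mul_norm_sq_pow {V : Type*}
    [NormedAddCommGroup V] {c : ℝ} (hc : 0 < c) {k : ℕ} (hk : k ≠ 0) (x : V) :
    ‖x‖ ≤ (1 + c⁻¹) * (1 + ‖1 + c * (‖x‖ ^ 2) ^ k‖) := by
  have hP : 0 ≤ (‖x‖ ^ 2) ^ k := by positivity
  have hx : ‖x‖ ≤ 1 + (‖x‖ ^ 2) ^ k := by
    rcases le_total ‖x‖ 1 with h | h
    · linarith
    · rw [← pow_mul]
      linarith [le_self_pow₀ h (by omega : 2 * k ≠ 0)]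
  have hexpand : (1 + c⁻¹) * (1 + (1 + c * (‖x‖ ^ 2) ^ k)) =
      2 + c * (‖x‖ ^ 2) ^ k + 2 * c⁻¹ + (‖x‖ ^ 2) ^ k := by
    field_simp; ring
  rw [norm_of_nonneg (by positivity), hexpand]
  have := inv_pos.mpr hc
  nlinarith

section ExpNegMulNormPow

variable {V : Type*} [NormedAddCommGroup V] [InnerProductSpace ℝ V]

-- `exp (-c ‖x‖^{2k}) = e · ψ (1 + c ‖x‖^{2k})`, where `ψ = smoothTransition · exp (-·)` is Schwartz on
-- `ℝ` and agrees with `exp (-·)` on `[1, ∞)`.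
noncomputable def expNegMulNormPowSchwartz (c : ℝ) (hc : 0 < c) (k : ℕ) (hk : k ≠ 0) :
    𝓢(V, ℂ) :=
  exp 1 • SchwartzMap.postcompCLM Complex.ofRealCLM
    (SchwartzMap.compCLM ℝ (g := fun x : V => 1 + c * (‖x‖ ^ 2) ^ k) (by fun_prop)
      ⟨1, 1 + c⁻¹, fun x => by
        simpa using norm_le_one_add_inv_mul_one_add_norm_one_add_mul_norm_sq_pow hc hk x⟩
      smoothTransitionMulExpNeg)

theorem expNegMulNormPowSchwartz_apply {c : ℝ} (hc : 0 < c) {k : ℕ} (hk : k ≠ 0) (x : V) :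
    expNegMulNormPowSchwartz c hc k hk x = (exp (-(c * ‖x‖ ^ (2 * k))) : ℂ) := by
  have hq : 1 ≤ 1 + c * (‖x‖ ^ 2) ^ k := le_add_of_nonneg_right (by positivity)
  simp only [expNegMulNormPowSchwartz, smul_apply, SchwartzMap.postcompCLM_apply,
    SchwartzMap.compCLM_apply, Function.comp_apply, smoothTransitionMulExpNeg_apply_of_one_le hq,
    Complex.ofRealCLM_apply, Complex.real_smul, ← Complex.ofReal_mul, ← exp_add, pow_mul]
  ring_nf

end ExpNegMulNormPow

theorem greenFn_eq_smul_integral (d : ℕ) (m t : ℝ) {c : ℝ} (hc : 0 < c)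
    (x : EuclideanSpace ℝ (Fin d)) :
    greenFn d m t x = (c ^ d / (2 * π) ^ d : ℝ) • ∫ η : EuclideanSpace ℝ (Fin d),
      Complex.exp (Complex.I * (⟪c • x, η⟫ : ℝ)) * (exp (-(t * c ^ m) * ‖η‖ ^ m) : ℂ) := by
  have hsubst := Measure.integral_comp_smul_of_nonneg volume
    (fun ξ : EuclideanSpace ℝ (Fin d) =>
      Complex.exp (Complex.I * (⟪x, ξ⟫ : ℝ)) * (exp (-t * ‖ξ‖ ^ m) : ℂ)) c (hR := hc.le)
  rw [finrank_euclideanSpace_fin, eq_inv_smul_iff₀ (by positivity)] at hsubst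
  rw [greenFn, ← hsubst, smul_smul, div_eq_inv_mul]
  congr 2 with η
  rw [real_inner_smul_right, real_inner_smul_left, norm_smul, norm_of_nonneg hc.le,
    mul_rpow hc.le (norm_nonneg η)]
  ring_nf

theorem greenFn_eq_smul_greenFn_one (d : ℕ) {m : ℝ} (hm : m ≠ 0) {t : ℝ} (ht : 0 < t)
    (x : EuclideanSpace ℝ (Fin d)) :
    greenFn d m t x = ((t ^ (-1 / m)) ^ d : ℝ) • greenFn d m 1 (t ^ (-1 / m) • x) := by
  have hscale : t * (t ^ (-1 / m)) ^ m = 1 := by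
    rw [← rpow_mul ht.le, div_mul_cancel₀ _ hm, rpow_neg_one, mul_inv_cancel₀ ht.ne']
  rw [greenFn_eq_smul_integral d m t (rpow_pos_of_pos ht _), hscale, greenFn, smul_smul,
    div_eq_mul_inv]

theorem greenFn_one_eq_fourierInv (d : ℕ) {k : ℕ} (hk : k ≠ 0) (x : EuclideanSpace ℝ (Fin d)) :
    greenFn d (2 * k : ℕ) 1 x =
      𝓕⁻ (expNegMulNormPowSchwartz (V := EuclideanSpace ℝ (Fin d)) ((2 * π) ^ (2 * k))
        (by positivity) k hk) x := by
  rw [greenFn_eq_smul_integral d _ 1 two_pi_pos, div_self (by positivity), one_smul,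
    SchwartzMap.fourierInv_coe, Real.fourierInv_eq']
  congr 1 with η
  rw [expNegMulNormPowSchwartz_apply, real_inner_smul_left, real_inner_comm x]
  simp only [rpow_natCast, smul_eq_mul, one_mul, neg_mul, mul_comm Complex.I]

theorem exists_integral_norm_greenFn_sub_le (d : ℕ) {k : ℕ} (hk : k ≠ 0) :
    ∃ C : ℝ, 0 < C ∧ ∀ t : ℝ, 0 < t → ∀ y : EuclideanSpace ℝ (Fin d),
      ∫ x, ‖greenFn d (2 * k : ℕ) t (x + y) - greenFn d (2 * k : ℕ) t x‖ ≤
        C * min 1 (t ^ (-1 / (2 * k : ℕ) : ℝ) * ‖y‖) := by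
  obtain ⟨C, hC, hW⟩ := SchwartzMap.exists_integral_norm_sub_translate_le (μ := volume)
    (𝓕⁻ (expNegMulNormPowSchwartz (V := EuclideanSpace ℝ (Fin d)) ((2 * π) ^ (2 * k))
      (by positivity) k hk))
  simp_rw [← greenFn_one_eq_fourierInv d hk] at hW
  refine ⟨C, hC, fun t ht y => ?_⟩
  have hr : 0 < t ^ (-1 / (2 * k : ℕ) : ℝ) := rpow_pos_of_pos ht _
  have hdil := integral_norm_sub_smul_comp_smul_add (μ := volume) (greenFn d (2 * k : ℕ) 1) hr y
  rw [finrank_euclideanSpace_fin] at hdil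
  simp_rw [greenFn_eq_smul_greenFn_one d (by positivity : ((2 * k : ℕ) : ℝ) ≠ 0) ht, hdil]
  simpa only [norm_smul, norm_of_nonneg hr.le] using hW (t ^ (-1 / (2 * k : ℕ) : ℝ) • y)

theorem one_div_le_two_mul_one_sub_div {d m : ℕ} (h : (d : ℝ) < m) :
    1 / (m : ℝ) ≤ 2 * (1 - d / m) := by
  have hm : (0 : ℝ) < m := (Nat.cast_nonneg d).trans_lt h
  have hdm : (d : ℝ) + 1 ≤ m := by exact_mod_cast (show d + 1 ≤ m by exact_mod_cast h)
  rw [show 2 * (1 - (d : ℝ) / m) = (2 * m - 2 * d) / m by field_simp]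
  gcongr
  linarith

theorem rpow_mul_le_mul_rpow_sub_mul {t T γ β C I r : ℝ} (ht : 0 < t) (htT : t ≤ T)
    (hβγ : β ≤ γ) (hC : 0 ≤ C) (hr : 0 ≤ r) (hI : I ≤ C * (t ^ (-β) * r)) :
    t ^ γ * I ≤ C * T ^ (γ - β) * r :=
  calc t ^ γ * I ≤ t ^ γ * (C * (t ^ (-β) * r)) := by gcongr
    _ = C * t ^ (γ - β) * r := by rw [sub_eq_add_neg, rpow_add ht]; ring
    _ ≤ C * T ^ (γ - β) * r := by gcongr

theorem greenFn_L1_modulus_of_continuity_general (d : ℕ) (𝔪 : ℕ) (h𝔪 : 0 < 𝔪)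
    (heven : Even 𝔪) :
    ∃ C : ℝ, 0 < C ∧
      (∀ t : ℝ, 0 < t → ∀ y : EuclideanSpace ℝ (Fin d),
        (∫ x : EuclideanSpace ℝ (Fin d),
            ‖greenFn d 𝔪 t (x + y) - greenFn d 𝔪 t x‖) ≤
          C * min 1 (t ^ (-(1 : ℝ) / 𝔪) * ‖y‖)) ∧
      ((d : ℝ) < 𝔪 → ∀ T : ℝ, 0 < T → ∀ t : ℝ, 0 < t → t < T →
        ∀ y : EuclideanSpace ℝ (Fin d),
          t ^ (2 * (1 - (d : ℝ) / 𝔪)) *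
              ∫ x : EuclideanSpace ℝ (Fin d),
                ‖greenFn d 𝔪 t (x + y) - greenFn d 𝔪 t x‖ ≤
            C * T ^ (2 * (1 - (d : ℝ) / 𝔪) - 1 / 𝔪) * ‖y‖) := by
  obtain ⟨k, rfl⟩ := heven.two_dvd
  obtain ⟨C, hC, hG⟩ := exists_integral_norm_greenFn_sub_le d (k := k) (by omega)
  refine ⟨C, hC, hG, fun hdm T _ t ht htT y => ?_⟩
  refine rpow_mul_le_mul_rpow_sub_mul ht htT.le (one_div_le_two_mul_one_sub_div hdm) hC.le
    (norm_nonneg y) ?_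
  rw [← neg_div]
  exact (hG t ht y).trans (mul_le_mul_of_nonneg_left (min_le_right _ _) hC.le)

/-- `L¹` modulus of continuity of the Green's function: there is `C > 0` with
`∫ |G(t,x+y) - G(t,x)| dx ≤ C min(1, t^{-1/𝔪}‖y‖)` for all `t > 0`, `y`; consequently, if
`𝔪 > d` and `γ = 2(1 - d/𝔪)`, then for every `T > 0` and `t ∈ (0,T)`,
`t^γ ∫ |G(t,x+y) - G(t,x)| dx ≤ C T^{γ - 1/𝔪} ‖y‖`. -/
theorem greenFn_L1_modulus_of_continuity (d : ℕ) (hd : 1 ≤ d) (𝔪 : ℕ) (h𝔪 : 0 < 𝔪)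
    (heven : Even 𝔪) :
    ∃ C : ℝ, 0 < C ∧
      (∀ t : ℝ, 0 < t → ∀ y : EuclideanSpace ℝ (Fin d),
        (∫ x : EuclideanSpace ℝ (Fin d),
            ‖greenFn d 𝔪 t (x + y) - greenFn d 𝔪 t x‖) ≤
          C * min 1 (t ^ (-(1 : ℝ) / 𝔪) * ‖y‖)) ∧
      ((d : ℝ) < 𝔪 → ∀ T : ℝ, 0 < T → ∀ t : ℝ, 0 < t → t < T →
        ∀ y : EuclideanSpace ℝ (Fin d),
          t ^ (2 * (1 - (d : ℝ) / 𝔪)) *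
              ∫ x : EuclideanSpace ℝ (Fin d),
                ‖greenFn d 𝔪 t (x + y) - greenFn d 𝔪 t x‖ ≤
            C * T ^ (2 * (1 - (d : ℝ) / 𝔪) - 1 / 𝔪) * ‖y‖) :=
  greenFn_L1_modulus_of_continuity_general d 𝔪 h𝔪 heven
end
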